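/- If f ∈ C^{k+1,α}([a,b]) with 0 < α < 1, then the function F(x) = ∫_a^b (f(y)-P_k(x,y))/(y-x)^{k+1} dy is differentiable on [a,b] and F'(x) = ∫_a^b ∂/∂x[(f(y)-P_k(x,y))/(y-x)^{k+1}] dy = (k+1) ∫_a^b (f(y)-P_{k+1}(x,y))/(y-x)^{k+2} dy. -/

import Mathlib

/-!
Write `Q_k(u, y) = (f y - P_k(u, y)) / (y - u) ^ (k + 1)`. For `y ≠ u` the map `u ↦ Q_k(u, y)` has
derivative `(k + 1) Q_{k+1}(u, y)`, and the Hölder condition on `f^{(k+1)}` gives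
`|f y - P_{k+1}(u, y)| ≤ C |y - u| ^ (k + 1 + α)`, so this derivative is `O(|y - u| ^ (α - 1))`.
That bound is not uniform in `u` near the diagonal, so we do not differentiate under the integral
sign directly. Instead the difference quotients are dominated at the fixed point `x`:
`|Q_k(u, y) - Q_k(x, y)| ≤ K |u - x| |y - x| ^ (α - 1)`, by the mean value theorem when
`|y - x| ≥ 2 |u - x|`, and otherwise because both values lie within `C |y - ·| ^ α` of
`f^{(k+1)}(·) / (k + 1)!`. Since `|y - x| ^ (α - 1)` is integrable, dominated convergence along
`u → x` within `[a, b]` gives the derivative, one-sided at the endpoints.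
-/

open Set intervalIntegral

/-- The `k`-th Taylor polynomial of `f` centered at `x` (derivatives within `s`), at `y`. -/
noncomputable def taylorPolyWithin (f : ℝ → ℝ) (s : Set ℝ) (k : ℕ) (x y : ℝ) : ℝ :=
  ∑ i ∈ Finset.range (k + 1), iteratedDerivWithin i f s x * (y - x) ^ i / (i.factorial : ℝ)

open Filter Topology MeasureTheory
open scoped Interval Nat NNReal

theorem HolderOnWith.of_dist_le {X Y : Type*} [PseudoMetricSpace X] [PseudoMetricSpace Y]
    {f : X → Y} {s : Set X} {C r : ℝ≥0}
    (h : ∀ x ∈ s, ∀ y ∈ s, dist (f x) (f y) ≤ C * dist x y ^ (r : ℝ)) :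
    HolderOnWith C r f s := by
  intro x hx y hy
  rw [edist_dist, edist_dist, ENNReal.ofReal_rpow_of_nonneg dist_nonneg r.coe_nonneg,
    ← ENNReal.ofReal_coe_nnreal, ← ENNReal.ofReal_mul C.coe_nonneg]
  exact ENNReal.ofReal_le_ofReal (h x hx y hy)

section

variable {f : ℝ → ℝ} {s : Set ℝ} {k : ℕ}

theorem taylorPolyWithin_eq_taylorWithinEval (f : ℝ → ℝ) (s : Set ℝ) (k : ℕ) (x y : ℝ) :
    taylorPolyWithin f s k x y = taylorWithinEval f k s x y := by
  rw [taylor_within_apply, taylorPolyWithin]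
  refine Finset.sum_congr rfl fun i _ => ?_
  rw [smul_eq_mul]
  ring

theorem taylorPolyWithin_self (f : ℝ → ℝ) (s : Set ℝ) (k : ℕ) (y : ℝ) :
    taylorPolyWithin f s k y y = f y := by
  rw [taylorPolyWithin_eq_taylorWithinEval, taylorWithinEval_self]

theorem taylorPolyWithin_succ (f : ℝ → ℝ) (s : Set ℝ) (k : ℕ) (x y : ℝ) :
    taylorPolyWithin f s (k + 1) x y = taylorPolyWithin f s k x y
      + iteratedDerivWithin (k + 1) f s x * (y - x) ^ (k + 1) / (k + 1)! :=
  Finset.sum_range_succ _ _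

theorem continuous_taylorPolyWithin (f : ℝ → ℝ) (s : Set ℝ) (k : ℕ) (x : ℝ) :
    Continuous (taylorPolyWithin f s k x) := by
  unfold taylorPolyWithin
  fun_prop

theorem hasDerivWithinAt_taylorPolyWithin (hs : UniqueDiffOn ℝ s)
    (hf : ContDiffOn ℝ (k + 1) f s) {t : ℝ} (ht : t ∈ s) (y : ℝ) :
    HasDerivWithinAt (fun t => taylorPolyWithin f s k t y)
      (iteratedDerivWithin (k + 1) f s t * (y - t) ^ k / k !) s t := by
  simp_rw [taylorPolyWithin_eq_taylorWithinEval]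
  refine (hasDerivWithinAt_taylorWithinEval hs self_mem_nhdsWithin ht subset_rfl
    (hf.of_le (by norm_cast; omega))
    (hf.differentiableOn_iteratedDerivWithin (by norm_cast; omega) hs t ht)).congr_deriv ?_
  rw [smul_eq_mul]
  ring

theorem abs_sub_taylorPolyWithin_succ_le {C r : ℝ≥0} (hs : s.OrdConnected)
    (hs' : UniqueDiffOn ℝ s) (hf : ContDiffOn ℝ (k + 1) f s)
    (hH : HolderOnWith C r (iteratedDerivWithin (k + 1) f s) s) {t y : ℝ} (ht : t ∈ s)
    (hy : y ∈ s) :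
    |f y - taylorPolyWithin f s (k + 1) t y| ≤ C / k ! * |y - t| ^ (r : ℝ) * |y - t| ^ (k + 1) := by
  set h := iteratedDerivWithin (k + 1) f s
  -- `ψ` interpolates between `P_{k+1}(t, y)` at `t` and `f y` at `y`, and its derivative
  -- only involves the increment `h τ - h t`.
  set ψ := fun τ => taylorPolyWithin f s k τ y + h t * (y - τ) ^ (k + 1) / (k + 1)!
  have hψ : ∀ τ ∈ [[t, y]], HasDerivWithinAt ψ ((h τ - h t) * (y - τ) ^ k / k !) [[t, y]] τ := by
    intro τ hτ
    have hpow := ((hasDerivWithinAt_id τ [[t, y]]).const_sub y).fun_pow (k + 1)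
    refine (((hasDerivWithinAt_taylorPolyWithin hs' hf (hs.uIcc_subset ht hy hτ) y).mono
      (hs.uIcc_subset ht hy)).add ((hpow.const_mul (h t)).div_const _)).congr_deriv ?_
    simp only [id, Nat.add_sub_cancel, Nat.factorial_succ, Nat.cast_mul]
    field_simp
    simp only [h]
    ring
  have hψ' : ∀ τ ∈ [[t, y]], ‖(h τ - h t) * (y - τ) ^ k / (k ! : ℝ)‖
      ≤ C / k ! * |y - t| ^ (r : ℝ) * |y - t| ^ k := by
    intro τ hτ
    have hhol : |h τ - h t| ≤ C * |y - t| ^ (r : ℝ) := by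
      have := hH.dist_le (hs.uIcc_subset ht hy hτ) ht
      simp only [Real.dist_eq] at this
      exact this.trans (by
        gcongr _ * ?_
        exact Real.rpow_le_rpow (abs_nonneg _) (abs_sub_left_of_mem_uIcc hτ) r.coe_nonneg)
    rw [Real.norm_eq_abs, abs_div, abs_mul, abs_pow, Nat.abs_cast]
    calc |h τ - h t| * |y - τ| ^ k / k ! ≤ C * |y - t| ^ (r : ℝ) * |y - t| ^ k / k ! := by
          gcongr ?_ * ?_ / _
          exact pow_le_pow_left₀ (abs_nonneg _) (abs_sub_right_of_mem_uIcc hτ) k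
      _ = _ := by ring
  have := Convex.norm_image_sub_le_of_norm_hasDerivWithin_le hψ hψ' (convex_uIcc t y)
    left_mem_uIcc right_mem_uIcc
  simp only [ψ, taylorPolyWithin_self, sub_self, zero_pow (Nat.succ_ne_zero k), mul_zero,
    zero_div, add_zero, Real.norm_eq_abs] at this
  rw [taylorPolyWithin_succ]
  exact this.trans_eq (by ring)

/-- At `y = x` this is `0 / 0 = 0`, not the value of the removable singularity; the point is
null for the integrals below. -/
noncomputable def taylorQuotient (f : ℝ → ℝ) (s : Set ℝ) (k : ℕ) (x y : ℝ) : ℝ :=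
  (f y - taylorPolyWithin f s k x y) / (y - x) ^ (k + 1)

theorem hasDerivWithinAt_taylorQuotient (hs : UniqueDiffOn ℝ s) (hf : ContDiffOn ℝ (k + 1) f s)
    {t y : ℝ} (ht : t ∈ s) (hyt : y ≠ t) :
    HasDerivWithinAt (fun t => taylorQuotient f s k t y)
      ((k + 1) * taylorQuotient f s (k + 1) t y) s t := by
  have hy : y - t ≠ 0 := sub_ne_zero.mpr hyt
  have hpow := ((hasDerivWithinAt_id t s).const_sub y).fun_pow (k + 1)
  refine (((hasDerivWithinAt_taylorPolyWithin hs hf ht y).const_sub (f y)).div hpow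
    (pow_ne_zero _ hy)).congr_deriv ?_
  simp only [taylorQuotient, taylorPolyWithin_succ, id, Nat.add_sub_cancel, Nat.factorial_succ,
    Nat.cast_mul]
  field_simp
  push_cast
  ring

theorem taylorQuotient_sub_eq (f : ℝ → ℝ) (s : Set ℝ) (k : ℕ) {t y : ℝ} (hyt : y ≠ t) :
    taylorQuotient f s k t y - iteratedDerivWithin (k + 1) f s t / (k + 1)!
      = (f y - taylorPolyWithin f s (k + 1) t y) / (y - t) ^ (k + 1) := by
  have hy : y - t ≠ 0 := sub_ne_zero.mpr hyt
  rw [taylorQuotient, taylorPolyWithin_succ]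
  field_simp
  ring

theorem abs_taylorQuotient_sub_iteratedDerivWithin_le {C r : ℝ≥0} (hs : s.OrdConnected)
    (hs' : UniqueDiffOn ℝ s) (hf : ContDiffOn ℝ (k + 1) f s)
    (hH : HolderOnWith C r (iteratedDerivWithin (k + 1) f s) s) {t y : ℝ} (ht : t ∈ s) (hy : y ∈ s)
    (hyt : y ≠ t) :
    |taylorQuotient f s k t y - iteratedDerivWithin (k + 1) f s t / (k + 1)!|
      ≤ C / k ! * |y - t| ^ (r : ℝ) := by
  have hpos : 0 < |y - t| ^ (k + 1) := by positivity
  rw [taylorQuotient_sub_eq f s k hyt, abs_div, abs_pow, div_le_iff₀ hpos]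
  exact abs_sub_taylorPolyWithin_succ_le hs hs' hf hH ht hy

theorem abs_taylorQuotient_succ_le {C r : ℝ≥0} (hs : s.OrdConnected) (hs' : UniqueDiffOn ℝ s)
    (hf : ContDiffOn ℝ (k + 1) f s) (hH : HolderOnWith C r (iteratedDerivWithin (k + 1) f s) s)
    {t y : ℝ} (ht : t ∈ s) (hy : y ∈ s) :
    |taylorQuotient f s (k + 1) t y| ≤ C / k ! * |y - t| ^ ((r : ℝ) - 1) := by
  rcases eq_or_ne y t with rfl | hyt
  · simp only [taylorQuotient, taylorPolyWithin_self, sub_self, zero_div, abs_zero]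
    positivity
  have hpos : 0 < |y - t| := abs_pos.mpr (sub_ne_zero.mpr hyt)
  rw [taylorQuotient, abs_div, abs_pow, div_le_iff₀ (by positivity), Real.rpow_sub_one hpos.ne']
  refine (abs_sub_taylorPolyWithin_succ_le hs hs' hf hH ht hy).trans_eq ?_
  field_simp
  ring

theorem abs_taylorQuotient_sub_taylorQuotient_le_of_far {C r : ℝ≥0} (hr : r ≤ 1)
    (hs : s.OrdConnected) (hs' : UniqueDiffOn ℝ s) (hf : ContDiffOn ℝ (k + 1) f s)
    (hH : HolderOnWith C r (iteratedDerivWithin (k + 1) f s) s) {x u y : ℝ} (hx : x ∈ s)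
    (hu : u ∈ s) (hy : y ∈ s) (hyx : y ≠ x) (hfar : 2 * |u - x| ≤ |y - x|) :
    |taylorQuotient f s k u y - taylorQuotient f s k x y|
      ≤ 2 * (k + 1) * (C / k !) * |u - x| * |y - x| ^ ((r : ℝ) - 1) := by
  have hyx' : 0 < |y - x| := abs_pos.mpr (sub_ne_zero.mpr hyx)
  have hclose : ∀ τ ∈ [[x, u]], |y - x| / 2 ≤ |y - τ| := fun τ hτ => by
    linarith [abs_sub_le y τ x, abs_sub_left_of_mem_uIcc hτ]
  have hhalf : (|y - x| / 2) ^ ((r : ℝ) - 1) ≤ 2 * |y - x| ^ ((r : ℝ) - 1) := by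
    have h2r : (1 : ℝ) ≤ 2 ^ (r : ℝ) := Real.one_le_rpow one_le_two r.coe_nonneg
    rw [Real.div_rpow (abs_nonneg _) zero_le_two, div_le_iff₀ (by positivity),
      Real.rpow_sub_one two_ne_zero]
    have : 0 ≤ |y - x| ^ ((r : ℝ) - 1) := by positivity
    nlinarith
  have hderiv : ∀ τ ∈ [[x, u]], HasDerivWithinAt (fun t => taylorQuotient f s k t y)
      ((k + 1) * taylorQuotient f s (k + 1) τ y) [[x, u]] τ := fun τ hτ =>
    (hasDerivWithinAt_taylorQuotient hs' hf (hs.uIcc_subset hx hu hτ)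
      (sub_ne_zero.mp (abs_pos.mp ((half_pos hyx').trans_le (hclose τ hτ))))).mono
      (hs.uIcc_subset hx hu)
  have hbound : ∀ τ ∈ [[x, u]], ‖(k + 1) * taylorQuotient f s (k + 1) τ y‖
      ≤ (k + 1) * (C / k ! * (2 * |y - x| ^ ((r : ℝ) - 1))) := fun τ hτ => by
    rw [norm_mul, Real.norm_eq_abs, Real.norm_eq_abs, abs_of_pos (by positivity)]
    gcongr
    refine (abs_taylorQuotient_succ_le hs hs' hf hH (hs.uIcc_subset hx hu hτ) hy).trans ?_
    gcongr
    exact (Real.rpow_le_rpow_of_nonpos (by positivity) (hclose τ hτ)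
      (by simpa using hr)).trans hhalf
  refine (Convex.norm_image_sub_le_of_norm_hasDerivWithin_le hderiv hbound (convex_uIcc x u)
    left_mem_uIcc right_mem_uIcc).trans_eq ?_
  rw [Real.norm_eq_abs]
  ring

theorem abs_taylorQuotient_sub_taylorQuotient_le_of_near {C r : ℝ≥0} (hr : r ≤ 1)
    (hs : s.OrdConnected) (hs' : UniqueDiffOn ℝ s) (hf : ContDiffOn ℝ (k + 1) f s)
    (hH : HolderOnWith C r (iteratedDerivWithin (k + 1) f s) s) {x u y : ℝ} (hx : x ∈ s)
    (hu : u ∈ s) (hy : y ∈ s) (hyx : y ≠ x) (hyu : y ≠ u) (hnear : |y - x| ≤ 2 * |u - x|) :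
    |taylorQuotient f s k u y - taylorQuotient f s k x y|
      ≤ 9 * C * |u - x| * |y - x| ^ ((r : ℝ) - 1) := by
  set h := iteratedDerivWithin (k + 1) f s
  set D := 3 * |u - x|
  have hyx' : 0 < |y - x| := abs_pos.mpr (sub_ne_zero.mpr hyx)
  have hC : (C : ℝ) / k ! ≤ C := div_le_self C.coe_nonneg (by exact_mod_cast k.factorial_pos)
  have hle : ∀ z, 0 ≤ z → z ≤ D → (C : ℝ) * z ^ (r : ℝ) ≤ C * D ^ (r : ℝ) := fun z hz hzD => by
    gcongr
  have hD : 0 < D := by linarith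
  have hDr : D ^ (r : ℝ) ≤ D * |y - x| ^ ((r : ℝ) - 1) :=
    calc D ^ (r : ℝ) = D * D ^ ((r : ℝ) - 1) := by rw [Real.rpow_sub_one hD.ne']; field_simp
      _ ≤ D * |y - x| ^ ((r : ℝ) - 1) := mul_le_mul_of_nonneg_left
        (Real.rpow_le_rpow_of_nonpos hyx' (by linarith) (by linarith [NNReal.coe_le_one.mpr hr]))
        hD.le
  have h1 : |taylorQuotient f s k u y - h u / (k + 1)!| ≤ C * D ^ (r : ℝ) :=
    (abs_taylorQuotient_sub_iteratedDerivWithin_le hs hs' hf hH hu hy hyu).trans <|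
      (mul_le_mul_of_nonneg_right hC (by positivity)).trans
        (hle _ (abs_nonneg _) (by linarith [abs_sub_le y x u, abs_sub_comm x u]))
  have h2 : |h u / (k + 1)! - h x / (k + 1)!| ≤ C * D ^ (r : ℝ) := by
    rw [← sub_div, abs_div, Nat.abs_cast]
    calc |h u - h x| / (k + 1)! ≤ C * |u - x| ^ (r : ℝ) / (k + 1)! := by
          gcongr
          simpa only [Real.dist_eq] using hH.dist_le hu hx
      _ ≤ C * |u - x| ^ (r : ℝ) :=
          div_le_self (by positivity) (by exact_mod_cast (k + 1).factorial_pos)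
      _ ≤ C * D ^ (r : ℝ) := hle _ (abs_nonneg _) (by linarith)
  have h3 : |h x / (k + 1)! - taylorQuotient f s k x y| ≤ C * D ^ (r : ℝ) := by
    rw [abs_sub_comm]
    exact (abs_taylorQuotient_sub_iteratedDerivWithin_le hs hs' hf hH hx hy hyx).trans <|
      (mul_le_mul_of_nonneg_right hC (by positivity)).trans (hle _ (abs_nonneg _) (by linarith))
  calc |taylorQuotient f s k u y - taylorQuotient f s k x y|
      ≤ |taylorQuotient f s k u y - h u / (k + 1)!| + |h u / (k + 1)! - h x / (k + 1)!|
        + |h x / (k + 1)! - taylorQuotient f s k x y| := by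
        refine le_of_eq_of_le ?_ (abs_add_three _ _ _)
        ring_nf
    _ ≤ 3 * (C * (D * |y - x| ^ ((r : ℝ) - 1))) := by nlinarith [C.coe_nonneg]
    _ = _ := by ring

theorem abs_taylorQuotient_sub_taylorQuotient_le {C r : ℝ≥0} (hr : r ≤ 1)
    (hs : s.OrdConnected) (hs' : UniqueDiffOn ℝ s) (hf : ContDiffOn ℝ (k + 1) f s)
    (hH : HolderOnWith C r (iteratedDerivWithin (k + 1) f s) s) {x u y : ℝ} (hx : x ∈ s)
    (hu : u ∈ s) (hy : y ∈ s) (hyx : y ≠ x) (hyu : y ≠ u) :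
    |taylorQuotient f s k u y - taylorQuotient f s k x y|
      ≤ 9 * (k + 1) * C * |u - x| * |y - x| ^ ((r : ℝ) - 1) := by
  have hK : 0 ≤ |u - x| * |y - x| ^ ((r : ℝ) - 1) := by positivity
  rcases le_total (2 * |u - x|) |y - x| with hfar | hnear
  · refine (abs_taylorQuotient_sub_taylorQuotient_le_of_far hr hs hs' hf hH hx hu hy hyx
      hfar).trans ?_
    have hC : (C : ℝ) / k ! ≤ C := div_le_self C.coe_nonneg (by exact_mod_cast k.factorial_pos)
    rw [mul_assoc _ |u - x|, mul_assoc _ |u - x|]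
    gcongr
    nlinarith [C.coe_nonneg]
  · refine (abs_taylorQuotient_sub_taylorQuotient_le_of_near hr hs hs' hf hH hx hu hy hyx hyu
      hnear).trans ?_
    rw [mul_assoc _ |u - x|, mul_assoc _ |u - x|]
    gcongr
    nlinarith [C.coe_nonneg]

theorem aestronglyMeasurable_taylorQuotient (hf : ContinuousOn f s) {t : Set ℝ}
    (ht : MeasurableSet t) (hts : t ⊆ s) (x : ℝ) :
    AEStronglyMeasurable (taylorQuotient f s k x) (volume.restrict t) :=
  ((((hf.mono hts).sub (continuous_taylorPolyWithin f s k x).continuousOn).aestronglyMeasurable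
    ht).aemeasurable.div (by fun_prop)).aestronglyMeasurable

theorem intervalIntegrable_taylorQuotient {a b : ℝ} {C r : ℝ≥0} (hab : a < b)
    (hf : ContDiffOn ℝ (k + 1) f (Icc a b))
    (hH : HolderOnWith C r (iteratedDerivWithin (k + 1) f (Icc a b)) (Icc a b)) {u : ℝ}
    (hu : u ∈ Icc a b) :
    IntervalIntegrable (taylorQuotient f (Icc a b) k u) volume a b := by
  set c := iteratedDerivWithin (k + 1) f (Icc a b) u / (k + 1)!
  refine IntervalIntegrable.mono_fun' (g := fun _ => C / k ! * (b - a) ^ (r : ℝ) + |c|)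
    intervalIntegrable_const
    (aestronglyMeasurable_taylorQuotient hf.continuousOn measurableSet_uIoc
      (uIoc_subset_uIcc.trans (uIcc_of_le hab.le).subset) u) ?_
  rw [uIoc_of_le hab.le]
  filter_upwards [ae_restrict_mem measurableSet_Ioc,
    ae_restrict_of_ae (compl_mem_ae_iff.mpr (measure_singleton u))] with y hy hyu
  have hy' := Ioc_subset_Icc_self hy
  calc ‖taylorQuotient f (Icc a b) k u y‖
      ≤ |taylorQuotient f (Icc a b) k u y - c| + |c| := by
        rw [Real.norm_eq_abs]
        linarith [abs_sub_abs_le_abs_sub (taylorQuotient f (Icc a b) k u y) c]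
    _ ≤ C / k ! * (b - a) ^ (r : ℝ) + |c| := by
        gcongr
        refine (abs_taylorQuotient_sub_iteratedDerivWithin_le ordConnected_Icc
          (uniqueDiffOn_Icc hab) hf hH hu hy' hyu).trans ?_
        gcongr
        exact abs_sub_le_iff.mpr ⟨by linarith [hy'.2, hu.1], by linarith [hy'.1, hu.2]⟩

theorem intervalIntegrable_abs_sub_rpow {p : ℝ} (hp : -1 < p) (x a b : ℝ) :
    IntervalIntegrable (fun y => |y - x| ^ p) volume a b := by
  have hloc : LocallyIntegrable (fun z : ℝ => |z| ^ p) volume :=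
    locallyIntegrable_of_norm_le_rpow (by simp) (α := -p) (C := 1) (by simp; linarith)
      (Filter.Eventually.of_forall fun z => by
        simp [abs_of_nonneg (Real.rpow_nonneg (abs_nonneg z) p)])
      (continuous_abs.measurable.pow_const p).aestronglyMeasurable
  simpa using ((hloc.integrableOn_isCompact isCompact_uIcc).intervalIntegrable
    (a := a - x) (b := b - x)).comp_sub_right x

theorem hasDerivWithinAt_integral_taylorQuotient {a b : ℝ} {C r : ℝ≥0} (hab : a < b)
    (hr0 : 0 < r) (hr : r ≤ 1) (hf : ContDiffOn ℝ (k + 1) f (Icc a b))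
    (hH : HolderOnWith C r (iteratedDerivWithin (k + 1) f (Icc a b)) (Icc a b)) {x : ℝ}
    (hx : x ∈ Icc a b) :
    HasDerivWithinAt (fun u => ∫ y in a..b, taylorQuotient f (Icc a b) k u y)
      (∫ y in a..b, (k + 1) * taylorQuotient f (Icc a b) (k + 1) x y) (Icc a b) x := by
  have hs' := uniqueDiffOn_Icc hab
  have hIoc : Ι a b ⊆ Icc a b := uIoc_subset_uIcc.trans (uIcc_of_le hab.le).subset
  have hslope : ∀ u ∈ Icc a b \ {x},
      ∫ y in a..b, slope (fun u => taylorQuotient f (Icc a b) k u y) x u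
        = slope (fun u => ∫ y in a..b, taylorQuotient f (Icc a b) k u y) x u := fun u hu => by
    simp only [slope_def_field]
    rw [intervalIntegral.integral_div, intervalIntegral.integral_sub
      (intervalIntegrable_taylorQuotient hab hf hH hu.1)
      (intervalIntegrable_taylorQuotient hab hf hH hx)]
  rw [hasDerivWithinAt_iff_tendsto_slope]
  refine Tendsto.congr' (eventually_nhdsWithin_of_forall hslope) ?_
  refine intervalIntegral.tendsto_integral_filter_of_dominated_convergence
    (fun y => 9 * (k + 1) * C * |y - x| ^ ((r : ℝ) - 1)) ?_ ?_ ?_ ?_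
  · refine Filter.Eventually.of_forall fun u => ?_
    simp only [slope_def_field]
    have hm := fun v => aestronglyMeasurable_taylorQuotient (k := k) hf.continuousOn
      measurableSet_uIoc hIoc v
    exact (((hm u).sub (hm x)).aemeasurable.div_const _).aestronglyMeasurable
  · refine eventually_nhdsWithin_of_forall fun u hu => ?_
    filter_upwards [compl_mem_ae_iff.mpr (measure_singleton x),
      compl_mem_ae_iff.mpr (measure_singleton u)] with y hyx hyu hy
    have hux : 0 < |u - x| := abs_pos.mpr (sub_ne_zero.mpr hu.2)
    rw [slope_def_field, Real.norm_eq_abs, abs_div, div_le_iff₀ hux]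
    refine (abs_taylorQuotient_sub_taylorQuotient_le hr ordConnected_Icc hs' hf hH hx hu.1
      (hIoc hy) hyx hyu).trans_eq ?_
    ring
  · exact (intervalIntegrable_abs_sub_rpow (by simpa using hr0) x a b).const_mul _
  · filter_upwards [compl_mem_ae_iff.mpr (measure_singleton x)] with y hyx hy
    exact hasDerivWithinAt_iff_tendsto_slope.mp (hasDerivWithinAt_taylorQuotient hs' hf hx hyx)

end

theorem deriv_integral_taylor_remainder (a b α : ℝ) (k : ℕ) (hab : a < b)
    (hα : 0 < α) (hα1 : α < 1) (f : ℝ → ℝ) (M : ℝ)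
    (hf : ContDiffOn ℝ (k + 1) f (Icc a b))
    (hH : ∀ x ∈ Icc a b, ∀ y ∈ Icc a b,
      |iteratedDerivWithin (k + 1) f (Icc a b) x - iteratedDerivWithin (k + 1) f (Icc a b) y|
        ≤ M * |x - y| ^ α) :
    ∀ x ∈ Icc a b,
      HasDerivWithinAt
        (fun u => ∫ y in a..b, (f y - taylorPolyWithin f (Icc a b) k u y) / (y - u) ^ (k + 1))
        ((k + 1) * ∫ y in a..b,
          (f y - taylorPolyWithin f (Icc a b) (k + 1) x y) / (y - x) ^ (k + 2))
        (Icc a b) x := by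
  intro x hx
  have hM : 0 ≤ M := nonneg_of_mul_nonneg_left
    ((abs_nonneg _).trans (hH a (left_mem_Icc.mpr hab.le) b (right_mem_Icc.mpr hab.le)))
    (Real.rpow_pos_of_pos (abs_pos.mpr (sub_ne_zero.mpr hab.ne)) α)
  lift M to ℝ≥0 using hM
  lift α to ℝ≥0 using hα.le
  have hHolder : HolderOnWith M α (iteratedDerivWithin (k + 1) f (Icc a b)) (Icc a b) :=
    .of_dist_le fun x hx y hy => by simpa only [Real.dist_eq] using hH x hx y hy
  have h := hasDerivWithinAt_integral_taylorQuotient hab hα (by exact_mod_cast hα1.le) hf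
    hHolder hx
  rwa [intervalIntegral.integral_const_mul] at h
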